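/- arXiv:2008.06184 — 5 statements merged into one kernel-verified Lean document; each statement's English description precedes it below -/
import Mathlib

section
/- Let C ⊆ ℝ^d be convex, E ⊆ C, and x ∈ C. If F : C → ℝ^{d'} is strict inversely convexity preserving (i.e., F((a,b)) ⊆ (F(a),F(b)) for all a,b ∈ C), then x ∈ ri(co(E)) implies F(x) ∈ ri(co(F(E))). -/
/-!
By convexity of `C`, `C ∩ F ⁻¹' co(F(E))` is convex, so `F` maps `co(E)` into `co(F(E))`.
A point `p` of a convex set `T` lies in `ri(T)` iff it can be pushed beyond every `y ∈ T`, i.e.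
`p + ε (p - y) ∈ T` for some `ε > 0` (Rockafellar, Thm. 6.4), and the set of such `y` is convex,
so for `p = F x` it is enough to treat `y = F a` with `a ∈ E`. Since `x ∈ ri(co(E))`, `x` lies in
an open segment `(a, z)` with `z ∈ co(E)`; then `F x ∈ (F a, F z)` with `F z ∈ co(F(E))`, which
pushes `F x` beyond `F a`.
-/

open Set Filter Topology

section Segment

variable {V : Type*} [AddCommGroup V] [Module ℝ V] {x y z : V}

theorem mem_openSegment_iff_exists_pos_eq_add_smul_sub :
    x ∈ openSegment ℝ y z ↔ ∃ ε > (0 : ℝ), z = x + ε • (x - y) := by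
  constructor
  · rintro ⟨a, b, ha, hb, hab, rfl⟩
    obtain rfl : b = 1 - a := by linarith
    refine ⟨a / (1 - a), div_pos ha hb, ?_⟩
    linear_combination (norm := module) (div_mul_cancel₀ a hb.ne') • (y - z)
  · rintro ⟨ε, hε, rfl⟩
    refine ⟨ε / (1 + ε), 1 / (1 + ε), by positivity, by positivity, by field_simp; ring, ?_⟩
    linear_combination (norm := module) (one_div_mul_cancel (by positivity : 1 + ε ≠ 0)) • x

theorem Convex.convex_setOf_exists_pos_add_smul_sub_mem {s : Set V} (hs : Convex ℝ s)
    (hx : x ∈ s) : Convex ℝ {y | ∃ ε > (0 : ℝ), x + ε • (x - y) ∈ s} := by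
  rintro y₁ ⟨ε₁, hε₁, h₁⟩ y₂ ⟨ε₂, hε₂, h₂⟩ a b ha hb hab
  set ε := min ε₁ ε₂
  have shrink : ∀ {v : V} {δ : ℝ}, 0 < δ → ε ≤ δ → x + δ • v ∈ s → x + ε • v ∈ s := by
    intro v δ hδ hεδ h
    have := hs.add_smul_mem hx h ⟨by positivity, (div_le_one hδ).2 hεδ⟩
    rwa [smul_smul, div_mul_cancel₀ _ hδ.ne'] at this
  refine ⟨ε, lt_min hε₁ hε₂, ?_⟩
  have hcomb : x + ε • (x - (a • y₁ + b • y₂)) =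
      a • (x + ε • (x - y₁)) + b • (x + ε • (x - y₂)) := by
    obtain rfl : b = 1 - a := by linarith
    module
  rw [hcomb]
  exact hs (shrink hε₁ (min_le_left _ _) h₁) (shrink hε₂ (min_le_right _ _) h₂) ha hb hab

end Segment

theorem mapsTo_convexHull_of_image_openSegment_subset {V W : Type*} [AddCommGroup V]
    [Module ℝ V] [AddCommGroup W] [Module ℝ W] {C E : Set V} {F : V → W} (hC : Convex ℝ C)
    (hE : E ⊆ C) (hF : ∀ a ∈ C, ∀ b ∈ C, F '' openSegment ℝ a b ⊆ openSegment ℝ (F a) (F b)) :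
    MapsTo F (convexHull ℝ E) (convexHull ℝ (F '' E)) := by
  have hconv : Convex ℝ (C ∩ F ⁻¹' convexHull ℝ (F '' E)) := by
    refine convex_iff_openSegment_subset.2 fun a ⟨haC, ha⟩ b ⟨hbC, hb⟩ =>
      subset_inter (hC.openSegment_subset haC hbC) ?_
    exact image_subset_iff.1 <|
      (hF a haC b hbC).trans ((convex_convexHull ℝ _).openSegment_subset ha hb)
  have hEsub : E ⊆ C ∩ F ⁻¹' convexHull ℝ (F '' E) :=
    subset_inter hE fun a ha => subset_convexHull ℝ _ (mem_image_of_mem F ha)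
  exact fun y hy => (convexHull_min hEsub hconv hy).2

section IntrinsicInterior

variable {V : Type*} [AddCommGroup V] [Module ℝ V] [TopologicalSpace V] {s : Set V} {x y : V}

theorem mem_intrinsicInterior_iff_mem_nhdsWithin :
    x ∈ intrinsicInterior ℝ s ↔ x ∈ affineSpan ℝ s ∧ s ∈ 𝓝[affineSpan ℝ s] x := by
  constructor
  · rintro ⟨y, hy, rfl⟩
    exact ⟨y.2, preimage_coe_mem_nhds_subtype.1 (mem_interior_iff_mem_nhds.1 hy)⟩
  · rintro ⟨hx, hs⟩
    exact ⟨⟨x, hx⟩, mem_interior_iff_mem_nhds.2 (preimage_coe_mem_nhds_subtype.2 hs), rfl⟩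

variable [IsTopologicalAddGroup V] [ContinuousSMul ℝ V]

theorem exists_pos_add_smul_sub_mem_of_mem_intrinsicInterior (hx : x ∈ intrinsicInterior ℝ s)
    (hy : y ∈ s) : ∃ ε > (0 : ℝ), x + ε • (x - y) ∈ s := by
  obtain ⟨hxA, hs⟩ := mem_intrinsicInterior_iff_mem_nhdsWithin.1 hx
  have hline : Tendsto (fun ε : ℝ => x + ε • (x - y)) (𝓝 0) (𝓝[affineSpan ℝ s] x) := by
    refine tendsto_nhdsWithin_iff.2 ⟨?_, Eventually.of_forall fun ε => ?_⟩
    · exact (show Continuous fun ε : ℝ => x + ε • (x - y) by fun_prop).tendsto' 0 x (by simp)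
    · simpa [vsub_eq_sub, vadd_eq_add, add_comm] using
        (affineSpan ℝ s).smul_vsub_vadd_mem ε hxA (subset_affineSpan ℝ s hy) hxA
  exact ((hline.eventually hs).filter_mono nhdsWithin_le_nhds |>.and
    (self_mem_nhdsWithin : Ioi (0 : ℝ) ∈ 𝓝[>] 0)).exists.imp fun ε h => ⟨h.2, h.1⟩

theorem Convex.openSegment_intrinsicInterior_self_subset_intrinsicInterior (hs : Convex ℝ s)
    (hx : x ∈ intrinsicInterior ℝ s) (hy : y ∈ s) :
    openSegment ℝ x y ⊆ intrinsicInterior ℝ s := by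
  rintro _ ⟨a, b, ha, hb, hab, rfl⟩
  obtain ⟨hxA, hxs⟩ := mem_intrinsicInterior_iff_mem_nhdsWithin.1 hx
  set g : V → V := fun w => a⁻¹ • (w - y) + y
  obtain rfl : b = 1 - a := by linarith
  have hg : g (a • x + (1 - a) • y) = x := by
    linear_combination (norm := module) (inv_mul_cancel₀ ha.ne') • (x - y)
  have hgA : MapsTo g (affineSpan ℝ s) (affineSpan ℝ s) := fun w hw => by
    simpa [g, vsub_eq_sub, vadd_eq_add] using
      (affineSpan ℝ s).smul_vsub_vadd_mem a⁻¹ hw (subset_affineSpan ℝ s hy)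
        (subset_affineSpan ℝ s hy)
  have hgt : Tendsto g (𝓝[affineSpan ℝ s] (a • x + (1 - a) • y)) (𝓝[affineSpan ℝ s] x) := by
    have hgc : Continuous g := by fun_prop
    simpa only [hg] using (hgc.continuousWithinAt (x := a • x + (1 - a) • y)).tendsto_nhdsWithin hgA
  refine mem_intrinsicInterior_iff_mem_nhdsWithin.2 ⟨subset_affineSpan ℝ s
    (hs (intrinsicInterior_subset hx) hy ha.le hb.le hab), ?_⟩
  filter_upwards [hgt hxs] with w hw
  have hw' : w = a • g w + (1 - a) • y := by
    linear_combination (norm := module) (mul_inv_cancel₀ ha.ne') • (y - w)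
  exact hw' ▸ hs hw hy ha.le hb.le hab

end IntrinsicInterior

theorem Convex.mem_intrinsicInterior_iff_forall_exists_pos_add_smul_sub_mem {V : Type*}
    [NormedAddCommGroup V] [NormedSpace ℝ V] [FiniteDimensional ℝ V] {s : Set V} {x : V}
    (hs : Convex ℝ s) :
    x ∈ intrinsicInterior ℝ s ↔ x ∈ s ∧ ∀ y ∈ s, ∃ ε > (0 : ℝ), x + ε • (x - y) ∈ s := by
  refine ⟨fun hx => ⟨intrinsicInterior_subset hx,
    fun y hy => exists_pos_add_smul_sub_mem_of_mem_intrinsicInterior hx hy⟩, fun ⟨hx, h⟩ => ?_⟩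
  obtain ⟨q, hq⟩ := Set.Nonempty.intrinsicInterior hs ⟨x, hx⟩
  obtain ⟨ε, hε, hz⟩ := h q (intrinsicInterior_subset hq)
  exact hs.openSegment_intrinsicInterior_self_subset_intrinsicInterior hq hz
    (mem_openSegment_iff_exists_pos_eq_add_smul_sub.2 ⟨ε, hε, rfl⟩)

theorem sicp_preserves_ri_general {d d' : ℕ} (C : Set (Fin d → ℝ)) (hC : Convex ℝ C)
    (E : Set (Fin d → ℝ)) (hE : E ⊆ C)
    (F : (Fin d → ℝ) → (Fin d' → ℝ))
    (hF : ∀ a ∈ C, ∀ b ∈ C, F '' openSegment ℝ a b ⊆ openSegment ℝ (F a) (F b))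
    (x : Fin d → ℝ)
    (hxri : x ∈ intrinsicInterior ℝ (convexHull ℝ E)) :
    F x ∈ intrinsicInterior ℝ (convexHull ℝ (F '' E)) := by
  set T := convexHull ℝ (F '' E)
  have hT : Convex ℝ T := convex_convexHull ℝ _
  have hFT : MapsTo F (convexHull ℝ E) T := mapsTo_convexHull_of_image_openSegment_subset hC hE hF
  obtain ⟨hxE, hxext⟩ :=
    (convex_convexHull ℝ E).mem_intrinsicInterior_iff_forall_exists_pos_add_smul_sub_mem.1 hxri
  refine hT.mem_intrinsicInterior_iff_forall_exists_pos_add_smul_sub_mem.2 ⟨hFT hxE, ?_⟩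
  refine convexHull_min ?_ (hT.convex_setOf_exists_pos_add_smul_sub_mem (hFT hxE))
  rintro _ ⟨a, ha, rfl⟩
  obtain ⟨ε, hε, hz⟩ := hxext a (subset_convexHull ℝ E ha)
  have hseg : x ∈ openSegment ℝ a (x + ε • (x - a)) :=
    mem_openSegment_iff_exists_pos_eq_add_smul_sub.2 ⟨ε, hε, rfl⟩
  obtain ⟨δ, hδ, hFz⟩ := mem_openSegment_iff_exists_pos_eq_add_smul_sub.1 <|
    hF a (hE ha) _ (convexHull_min hE hC hz) (mem_image_of_mem F hseg)
  exact ⟨δ, hδ, hFz ▸ hFT hz⟩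

/-- A strict inversely convexity preserving map `F : C → ℝ^{d'}` carries points of
`ri(co(E))` (for `E ⊆ C`) into `ri(co(F(E)))`. -/
theorem sicp_preserves_ri {d d' : ℕ} (C : Set (Fin d → ℝ)) (hC : Convex ℝ C)
    (E : Set (Fin d → ℝ)) (hE : E ⊆ C)
    (F : (Fin d → ℝ) → (Fin d' → ℝ))
    (hF : ∀ a ∈ C, ∀ b ∈ C, F '' openSegment ℝ a b ⊆ openSegment ℝ (F a) (F b))
    (x : Fin d → ℝ) (hx : x ∈ C)
    (hxri : x ∈ intrinsicInterior ℝ (convexHull ℝ E)) :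
    F x ∈ intrinsicInterior ℝ (convexHull ℝ (F '' E)) :=
  sicp_preserves_ri_general C hC E hE F hF x hxri
end

section
/- Let C ⊆ ℝ^d be convex, E ⊆ C, and F : C → ℝ^{d'} a continuous map that is inversely convexity preserving (F([a,b]) ⊆ [F(a),F(b)] for all a,b ∈ C). If x₀ ∈ cl(co(E)) ∩ C, then F(x₀) ∈ cl(co(F(E))). -/
/-!
The points of `co(E)` whose image lies in `co(F(E))` form a convex set, because `F` maps every
segment into the segment between the images of its endpoints; this set contains `E`, hence all
of `co(E)`. Continuity of `F` then carries `cl(co(E))` into `cl(F(co(E))) ⊆ cl(co(F(E)))`.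
-/

section

variable {𝕜 E F : Type*} [Semiring 𝕜] [PartialOrder 𝕜] [AddCommMonoid E] [Module 𝕜 E]
  [AddCommMonoid F] [Module 𝕜 F] {f : E → F}

theorem Convex.inter_preimage_of_image_segment_subset {D : Set E} {K : Set F}
    (hD : Convex 𝕜 D) (hK : Convex 𝕜 K)
    (hf : ∀ a ∈ D, ∀ b ∈ D, f '' segment 𝕜 a b ⊆ segment 𝕜 (f a) (f b)) :
    Convex 𝕜 (D ∩ f ⁻¹' K) := by
  refine convex_iff_segment_subset.2 fun a ha b hb x hx => ⟨hD.segment_subset ha.1 hb.1 hx, ?_⟩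
  exact hK.segment_subset ha.2 hb.2 (hf a ha.1 b hb.1 ⟨x, hx, rfl⟩)

theorem image_convexHull_subset_convexHull_image_of_image_segment_subset {s : Set E}
    (hf : ∀ a ∈ convexHull 𝕜 s, ∀ b ∈ convexHull 𝕜 s,
      f '' segment 𝕜 a b ⊆ segment 𝕜 (f a) (f b)) :
    f '' convexHull 𝕜 s ⊆ convexHull 𝕜 (f '' s) := by
  have hconv : Convex 𝕜 (convexHull 𝕜 s ∩ f ⁻¹' convexHull 𝕜 (f '' s)) :=
    (convex_convexHull 𝕜 s).inter_preimage_of_image_segment_subset (convex_convexHull 𝕜 _) hf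
  have hs : s ⊆ convexHull 𝕜 s ∩ f ⁻¹' convexHull 𝕜 (f '' s) := fun x hx =>
    ⟨subset_convexHull 𝕜 s hx, subset_convexHull 𝕜 _ (Set.mem_image_of_mem f hx)⟩
  rintro _ ⟨x, hx, rfl⟩
  exact (convexHull_min hs hconv hx).2

end

theorem continuous_icp_preserves_cl_general {d d' : ℕ} (C E : Set (Fin d → ℝ))
    (hcl : closure (convexHull ℝ E) ⊆ C)
    (F : (Fin d → ℝ) → (Fin d' → ℝ)) (hcont : ContinuousOn F C)
    (hicp : ∀ a ∈ C, ∀ b ∈ C, F '' segment ℝ a b ⊆ segment ℝ (F a) (F b))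
    (x₀ : Fin d → ℝ) (hx₀ : x₀ ∈ closure (convexHull ℝ E) ∩ C) :
    F x₀ ∈ closure (convexHull ℝ (F '' E)) := by
  have hsub : convexHull ℝ E ⊆ C := subset_closure.trans hcl
  have hclosure : F x₀ ∈ closure (F '' convexHull ℝ E) :=
    ((hcont x₀ hx₀.2).mono hsub).mem_closure_image hx₀.1
  exact closure_mono (image_convexHull_subset_convexHull_image_of_image_segment_subset
    fun a ha b hb => hicp a (hsub ha) b (hsub hb)) hclosure

/-- A continuous inversely convexity preserving map `F : C → ℝ^{d'}` carries points of
`cl(co(E))` (for `E ⊆ C`, assuming `cl(co(E)) ⊆ C`) into `cl(co(F(E)))`. -/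
theorem continuous_icp_preserves_cl {d d' : ℕ} (C E : Set (Fin d → ℝ))
    (hC : Convex ℝ C) (hE : E ⊆ C)
    (hcl : closure (convexHull ℝ E) ⊆ C)
    (F : (Fin d → ℝ) → (Fin d' → ℝ)) (hcont : ContinuousOn F C)
    (hicp : ∀ a ∈ C, ∀ b ∈ C, F '' segment ℝ a b ⊆ segment ℝ (F a) (F b))
    (x₀ : Fin d → ℝ) (hx₀ : x₀ ∈ closure (convexHull ℝ E) ∩ C) :
    F x₀ ∈ closure (convexHull ℝ (F '' E)) :=
  continuous_icp_preserves_cl_general C E hcl F hcont hicp x₀ hx₀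
end

section
/- A map g : C → ℝ^{d'} on a convex set C ⊆ ℝ^d preserves convexity (the image of every convex subset of C is convex) if and only if [g(x), g(y)] ⊆ g([x,y]) for all x, y ∈ C. -/
section

variable {𝕜 E F : Type*} [Semiring 𝕜] [PartialOrder 𝕜] [AddCommMonoid E] [AddCommMonoid F]
  [Module 𝕜 E] [Module 𝕜 F] {g : E → F}

theorem segment_subset_image_segment_of_convex_image [ZeroLEOneClass 𝕜] {x y : E}
    (hconv : Convex 𝕜 (g '' segment 𝕜 x y)) : segment 𝕜 (g x) (g y) ⊆ g '' segment 𝕜 x y :=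
  hconv.segment_subset (Set.mem_image_of_mem g (left_mem_segment 𝕜 x y))
    (Set.mem_image_of_mem g (right_mem_segment 𝕜 x y))

theorem Convex.image_of_segment_subset_image_segment {s : Set E} (hs : Convex 𝕜 s)
    (hg : ∀ x ∈ s, ∀ y ∈ s, segment 𝕜 (g x) (g y) ⊆ g '' segment 𝕜 x y) :
    Convex 𝕜 (g '' s) := by
  rw [convex_iff_segment_subset]
  rintro _ ⟨x, hx, rfl⟩ _ ⟨y, hy, rfl⟩
  exact (hg x hx y hy).trans (Set.image_mono (hs.segment_subset hx hy))

end

/-- `g` preserves convexity (images of convex subsets of `C` are convex) iff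
`[g(x), g(y)] ⊆ g([x,y])` for all `x, y ∈ C`. -/
theorem convexity_preserving_iff_segment {d d' : ℕ} (C : Set (Fin d → ℝ))
    (hC : Convex ℝ C) (g : (Fin d → ℝ) → (Fin d' → ℝ)) :
    (∀ E ⊆ C, Convex ℝ E → Convex ℝ (g '' E)) ↔
    (∀ x ∈ C, ∀ y ∈ C, segment ℝ (g x) (g y) ⊆ g '' segment ℝ x y) :=
  ⟨fun h x hx y hy => segment_subset_image_segment_of_convex_image
      (h _ (hC.segment_subset hx hy) (convex_segment x y)),
    fun h _ hE hEc => hEc.image_of_segment_subset_image_segment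
      fun x hx y hy => h x (hE hx) y (hE hy)⟩
end

section
/- Let X and X' be perspective functions on ℝ^{d+1} and ℝ^{d'+1} respectively, and let f : dom X → dom X' satisfy the homogeneity condition: for every s ∈ dom X and λ > 0 there exists μ > 0 (depending on λ, s) with f(λ s) = μ f(s). Then there exists a unique map F : Im X → Im X' such that F ∘ X = X' ∘ f. Moreover if f is strict inversely convexity preserving, so is F. -/
/-- The perspective function `X(s) = (s^1/s^0, ..., s^d/s^0)` on `{s : s^0 > 0}`. -/
noncomputable def persp (d : ℕ) (s : Fin (d + 1) → ℝ) : Fin d → ℝ := fun i => s i.succ / s 0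

/-!
Every fibre of the perspective map `X` over its image is a ray `{λ s | λ > 0}`, which meets the
slice `s 0 = 1` in exactly one point `(1, x)`. Homogeneity of `f` says that `X' ∘ f` is constant
on these rays, so `F x := X' (f (1, x))` is forced. Since `x ↦ (1, x)` is affine and `X` maps
open segments of `dom X` into open segments, `F` inherits strict inverse convexity preservation
from `f`.
-/

theorem Fin.cons_mem_openSegment {𝕜 E : Type*} [Semiring 𝕜] [PartialOrder 𝕜] [AddCommMonoid E]
    [Module 𝕜 E] {n : ℕ} (c : E) {x y z : Fin n → E} (hz : z ∈ openSegment 𝕜 x y) :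
    (Fin.cons c z : Fin (n + 1) → E) ∈
      openSegment 𝕜 (Fin.cons c x : Fin (n + 1) → E) (Fin.cons c y) := by
  obtain ⟨a, b, ha, hb, hab, rfl⟩ := hz
  refine ⟨a, b, ha, hb, hab, funext fun i => Fin.cases ?_ (fun j => ?_) i⟩
  · simp [← add_smul, hab]
  · simp

theorem persp_smul {d : ℕ} (s : Fin (d + 1) → ℝ) {μ : ℝ} (hμ : μ ≠ 0) :
    persp d (μ • s) = persp d s :=
  funext fun _ => mul_div_mul_left _ _ hμ

theorem persp_mem_openSegment {d : ℕ} {u v w : Fin (d + 1) → ℝ} (hu : 0 < u 0) (hv : 0 < v 0)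
    (hw : w ∈ openSegment ℝ u v) :
    persp d w ∈ openSegment ℝ (persp d u) (persp d v) := by
  obtain ⟨a, b, ha, hb, hab, rfl⟩ := hw
  have hw0 : 0 < a * u 0 + b * v 0 := by positivity
  -- the weights are rescaled by the first coordinates of the endpoints
  refine ⟨a * u 0 / (a * u 0 + b * v 0), b * v 0 / (a * u 0 + b * v 0), by positivity,
    by positivity, by field_simp, funext fun i => ?_⟩
  simp only [persp, Pi.add_apply, Pi.smul_apply, smul_eq_mul]
  field_simp

def perspLift {d : ℕ} (x : Fin d → ℝ) : Fin (d + 1) → ℝ := Fin.cons 1 x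

theorem perspLift_persp {d : ℕ} {s : Fin (d + 1) → ℝ} (hs : 0 < s 0) :
    perspLift (persp d s) = (s 0)⁻¹ • s := by
  funext i
  refine Fin.cases ?_ (fun j => ?_) i
  · simp [perspLift, inv_mul_cancel₀ hs.ne']
  · simp [perspLift, persp, div_eq_inv_mul]

section InducedMap

variable {d d' : ℕ} (f : (Fin (d + 1) → ℝ) → (Fin (d' + 1) → ℝ))

noncomputable def inducedMap (x : Fin d → ℝ) : Fin d' → ℝ := persp d' (f (perspLift x))

variable {f}

theorem inducedMap_persp
    (hhom : ∀ s : Fin (d + 1) → ℝ, 0 < s 0 → ∀ l : ℝ, 0 < l →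
      ∃ μ : ℝ, 0 < μ ∧ f (l • s) = μ • f s)
    {s : Fin (d + 1) → ℝ} (hs : 0 < s 0) :
    inducedMap f (persp d s) = persp d' (f s) := by
  obtain ⟨μ, hμ, hfs⟩ := hhom s hs (s 0)⁻¹ (inv_pos.mpr hs)
  rw [inducedMap, perspLift_persp hs, hfs, persp_smul _ hμ.ne']

theorem inducedMap_mem_openSegment
    (hmap : ∀ s : Fin (d + 1) → ℝ, 0 < s 0 → 0 < f s 0)
    (hf : ∀ a : Fin (d + 1) → ℝ, 0 < a 0 → ∀ b : Fin (d + 1) → ℝ, 0 < b 0 →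
      f '' openSegment ℝ a b ⊆ openSegment ℝ (f a) (f b))
    {x y z : Fin d → ℝ} (hz : z ∈ openSegment ℝ x y) :
    inducedMap f z ∈ openSegment ℝ (inducedMap f x) (inducedMap f y) :=
  persp_mem_openSegment (hmap _ one_pos) (hmap _ one_pos)
    (hf _ one_pos _ one_pos ⟨_, Fin.cons_mem_openSegment 1 hz, rfl⟩)

end InducedMap

/-- If `f : dom X → dom X'` satisfies the positive-homogeneity condition
`f(λs) = μ_{λ,s} f(s)`, there is a unique induced map `F` with `F ∘ X = X' ∘ f`;
moreover if `f` is strict inversely convexity preserving, so is `F`. -/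
theorem induced_map_exists_unique {d d' : ℕ}
    (f : (Fin (d + 1) → ℝ) → (Fin (d' + 1) → ℝ))
    (hmap : ∀ s : Fin (d + 1) → ℝ, 0 < s 0 → 0 < f s 0)
    (hhom : ∀ s : Fin (d + 1) → ℝ, 0 < s 0 → ∀ l : ℝ, 0 < l →
      ∃ μ : ℝ, 0 < μ ∧ f (l • s) = μ • f s) :
    ∃ F : (Fin d → ℝ) → (Fin d' → ℝ),
      (∀ s : Fin (d + 1) → ℝ, 0 < s 0 → F (persp d s) = persp d' (f s)) ∧
      (∀ G : (Fin d → ℝ) → (Fin d' → ℝ),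
        (∀ s : Fin (d + 1) → ℝ, 0 < s 0 → G (persp d s) = persp d' (f s)) →
        ∀ s : Fin (d + 1) → ℝ, 0 < s 0 → G (persp d s) = F (persp d s)) ∧
      ((∀ a : Fin (d + 1) → ℝ, 0 < a 0 → ∀ b : Fin (d + 1) → ℝ, 0 < b 0 →
          f '' openSegment ℝ a b ⊆ openSegment ℝ (f a) (f b)) →
        ∀ x ∈ persp d '' {s : Fin (d + 1) → ℝ | 0 < s 0},
        ∀ y ∈ persp d '' {s : Fin (d + 1) → ℝ | 0 < s 0},
          F '' openSegment ℝ x y ⊆ openSegment ℝ (F x) (F y)) := by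
  refine ⟨inducedMap f, fun s hs => inducedMap_persp hhom hs,
    fun G hG s hs => (hG s hs).trans (inducedMap_persp hhom hs).symm, ?_⟩
  rintro hf x - y - _ ⟨z, hz, rfl⟩
  exact inducedMap_mem_openSegment hmap hf hz
end

section
/- Change-of-numeraire invariance of the local arbitrage-free property: let E ⊆ ℝ^{d+1} be a set of price vectors with all coordinates of interest positive, and let s ∈ E with s^0 > 0, s^1 > 0. If X(s) ∈ ri(co(X(E))) (arbitrage-free with numeraire coordinate 0), then Y(s) ∈ ri(co(Y(E))) (arbitrage-free with numeraire coordinate 1), where X and Y are the perspective functions with respect to coordinates 0 and 1 respectively. -/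
/-- The perspective function w.r.t. the second coordinate:
`Y(s) = (s^0/s^1, s^2/s^1, ..., s^d/s^1)`. -/
noncomputable def perspY (d : ℕ) (s : Fin (d + 2) → ℝ) : Fin (d + 1) → ℝ :=
  fun i => (if i = 0 then s 0 else s i.succ) / s 1

/-!
Write `x = X(s)`. Then `Y(s) = G x` with `G x = (1, x₁, …, xₙ) / x₀`, and `G` is an involution of
`{x₀ ≠ 0}`. Writing a point as an affine combination `x = ∑ cᵢ zᵢ`, one gets
`G x = ∑ (cᵢ zᵢ₀ / x₀) G zᵢ`, again an affine combination, and a convex one when all `zᵢ₀ > 0`.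
Hence `G` maps the affine span of `X(E)` into that of `Y(E)` and back, and `co X(E)` into
`co Y(E)`; as `G` is continuous and is its own inverse, it carries a neighbourhood of `x` in the
affine span of `co X(E)` that lies in `co X(E)` to one of `G x` in `co Y(E)`.
-/

open Set

theorem mem_intrinsicInterior_of_continuousOn {𝕜 V W : Type*} [Ring 𝕜] [AddCommGroup V]
    [Module 𝕜 V] [TopologicalSpace V] [AddCommGroup W] [Module 𝕜 W] [TopologicalSpace W]
    {s : Set V} {t : Set W} {g : W → V} {U : Set W} {y : W}
    (hU : IsOpen U) (hg : ContinuousOn g U) (hyU : y ∈ U) (hy : y ∈ affineSpan 𝕜 t)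
    (hgy : g y ∈ intrinsicInterior 𝕜 s)
    (hspan : ∀ w ∈ U, w ∈ affineSpan 𝕜 t → g w ∈ affineSpan 𝕜 s)
    (hmem : ∀ w ∈ U, g w ∈ s → w ∈ t) :
    y ∈ intrinsicInterior 𝕜 t := by
  obtain ⟨x, hx, hxy⟩ := hgy
  obtain ⟨O, hOs, hO, hxO⟩ := mem_interior.1 hx
  obtain ⟨O', hO', rfl⟩ := isOpen_induced_iff.1 hO
  refine ⟨⟨y, hy⟩, mem_interior.2 ⟨(↑) ⁻¹' (U ∩ g ⁻¹' O'), ?_, ?_, hyU, ?_⟩, rfl⟩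
  · rintro ⟨w, hwt⟩ ⟨hwU, hwO⟩
    exact hmem w hwU (hOs (show (⟨g w, hspan w hwU hwt⟩ : affineSpan 𝕜 s) ∈ _ from hwO))
  · exact (hg.isOpen_inter_preimage hU hO').preimage continuous_subtype_val
  · change g y ∈ O'
    rw [← hxy]
    exact hxO

section ChangeNumeraire

variable {𝕜 : Type*} [Field 𝕜] {n : ℕ}

def changeNumeraire (x : Fin (n + 1) → 𝕜) : Fin (n + 1) → 𝕜 :=
  fun i => (if i = 0 then 1 else x i) / x 0

theorem changeNumeraire_changeNumeraire {x : Fin (n + 1) → 𝕜} (hx : x 0 ≠ 0) :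
    changeNumeraire (changeNumeraire x) = x := by
  funext i
  rcases eq_or_ne i 0 with rfl | hi
  · simp [changeNumeraire]
  · simp [changeNumeraire, hi]
    field_simp

theorem changeNumeraire_apply_zero_ne_zero {x : Fin (n + 1) → 𝕜} (hx : x 0 ≠ 0) :
    changeNumeraire x 0 ≠ 0 := by
  simpa [changeNumeraire] using hx

theorem image_changeNumeraire_image {S : Set (Fin (n + 1) → 𝕜)} (hS : ∀ x ∈ S, x 0 ≠ 0) :
    changeNumeraire '' (changeNumeraire '' S) = S := by
  rw [image_image]
  exact (image_congr fun x hx => changeNumeraire_changeNumeraire (hS x hx)).trans (image_id' S)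

section Combination
variable {ι : Type*} {t : Finset ι} {c : ι → 𝕜} {z : ι → Fin (n + 1) → 𝕜} {x : Fin (n + 1) → 𝕜}

theorem sum_mul_apply_zero_div_eq_one (hx : ∑ i ∈ t, c i • z i = x) (h0 : x 0 ≠ 0) :
    ∑ i ∈ t, c i * z i 0 / x 0 = 1 := by
  rw [← Finset.sum_div, div_eq_one_iff_eq h0, ← hx]
  simp [Finset.sum_apply]

theorem changeNumeraire_sum_smul (hc : ∑ i ∈ t, c i = 1) (hz : ∀ i ∈ t, z i 0 ≠ 0)
    (hx : ∑ i ∈ t, c i • z i = x) (h0 : x 0 ≠ 0) :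
    changeNumeraire x = ∑ i ∈ t, (c i * z i 0 / x 0) • changeNumeraire (z i) := by
  funext j
  have hterm : ∀ i ∈ t, c i * z i 0 / x 0 * ((if j = 0 then 1 else z i j) / z i 0)
      = c i * (if j = 0 then 1 else z i j) / x 0 := by
    intro i hi
    field_simp [hz i hi]
  simp only [changeNumeraire, Finset.sum_apply, Pi.smul_apply, smul_eq_mul]
  rw [Finset.sum_congr rfl hterm, ← Finset.sum_div, ← hx]
  split_ifs <;> simp [hc, Finset.sum_apply]

end Combination

theorem changeNumeraire_mem_affineSpan_image {S : Set (Fin (n + 1) → 𝕜)}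
    (hS : ∀ x ∈ S, x 0 ≠ 0) {x : Fin (n + 1) → 𝕜} (hx : x ∈ affineSpan 𝕜 S) (h0 : x 0 ≠ 0) :
    changeNumeraire x ∈ affineSpan 𝕜 (changeNumeraire '' S) := by
  rw [← Subtype.range_coe (s := S)] at hx
  rw [← Subtype.range_coe (s := S), ← range_comp]
  obtain ⟨t, c, hc, rfl⟩ := eq_affineCombination_of_mem_affineSpan hx
  rw [t.affineCombination_eq_linear_combination _ _ hc] at h0 ⊢
  rw [changeNumeraire_sum_smul hc (fun i _ => hS i i.2) rfl h0,
    ← t.affineCombination_eq_linear_combination _ _ (sum_mul_apply_zero_div_eq_one rfl h0)]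
  exact affineCombination_mem_affineSpan (sum_mul_apply_zero_div_eq_one rfl h0) _

theorem pos_apply_of_mem_convexHull [LinearOrder 𝕜] [IsStrictOrderedRing 𝕜] {ι : Type*}
    {S : Set (ι → 𝕜)} {i : ι} (hS : ∀ x ∈ S, 0 < x i) {x : ι → 𝕜} (hx : x ∈ convexHull 𝕜 S) :
    0 < x i :=
  convexHull_min hS (convex_halfSpace_gt (LinearMap.proj (R := 𝕜) i).isLinear 0) hx

theorem changeNumeraire_mem_convexHull_image [LinearOrder 𝕜] [IsStrictOrderedRing 𝕜]
    {S : Set (Fin (n + 1) → 𝕜)} (hS : ∀ x ∈ S, 0 < x 0) {x : Fin (n + 1) → 𝕜}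
    (hx : x ∈ convexHull 𝕜 S) :
    changeNumeraire x ∈ convexHull 𝕜 (changeNumeraire '' S) := by
  have h0 : 0 < x 0 := pos_apply_of_mem_convexHull hS hx
  rw [convexHull_eq] at hx
  obtain ⟨ι, t, c, z, hc0, hc1, hzS, rfl⟩ := hx
  rw [t.centerMass_eq_of_sum_1 _ hc1] at h0 ⊢
  have hw1 := sum_mul_apply_zero_div_eq_one rfl h0.ne'
  rw [changeNumeraire_sum_smul hc1 (fun i hi => (hS _ (hzS i hi)).ne') rfl h0.ne',
    ← t.centerMass_eq_of_sum_1 _ hw1]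
  exact t.centerMass_mem_convexHull
    (fun i hi => div_nonneg (mul_nonneg (hc0 i hi) (hS _ (hzS i hi)).le) h0.le)
    (hw1.symm ▸ one_pos) fun i hi => mem_image_of_mem _ (hzS i hi)

theorem continuousOn_changeNumeraire [TopologicalSpace 𝕜] [IsTopologicalDivisionRing 𝕜] :
    ContinuousOn (changeNumeraire (𝕜 := 𝕜) (n := n)) {x | x 0 ≠ 0} := by
  refine continuousOn_pi.2 fun i => ContinuousOn.div ?_ (continuous_apply 0).continuousOn
    fun x hx => hx
  split_ifs
  exacts [continuousOn_const, (continuous_apply i).continuousOn]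

theorem changeNumeraire_mem_intrinsicInterior_convexHull_image [LinearOrder 𝕜]
    [IsStrictOrderedRing 𝕜] [TopologicalSpace 𝕜] [IsTopologicalDivisionRing 𝕜] [T1Space 𝕜]
    {S : Set (Fin (n + 1) → 𝕜)} (hS : ∀ x ∈ S, 0 < x 0) {x : Fin (n + 1) → 𝕜}
    (hx : x ∈ intrinsicInterior 𝕜 (convexHull 𝕜 S)) :
    changeNumeraire x ∈ intrinsicInterior 𝕜 (convexHull 𝕜 (changeNumeraire '' S)) := by
  have h0 : x 0 ≠ 0 := (pos_apply_of_mem_convexHull hS (intrinsicInterior_subset hx)).ne'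
  have hS0 : ∀ y ∈ S, y 0 ≠ 0 := fun y hy => (hS y hy).ne'
  have hGS0 : ∀ y ∈ changeNumeraire '' S, y 0 ≠ 0 := by
    rintro _ ⟨y, hy, rfl⟩
    exact changeNumeraire_apply_zero_ne_zero (hS0 y hy)
  refine mem_intrinsicInterior_of_continuousOn (𝕜 := 𝕜) (isOpen_compl_singleton.preimage
    (continuous_apply 0)) continuousOn_changeNumeraire (changeNumeraire_apply_zero_ne_zero h0)
    ?_ (by rwa [changeNumeraire_changeNumeraire h0]) (fun w hw hwS => ?_) (fun w hw hwS => ?_)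
  · rw [affineSpan_convexHull]
    refine changeNumeraire_mem_affineSpan_image hS0 ?_ h0
    rw [← affineSpan_convexHull]
    exact subset_affineSpan 𝕜 _ (intrinsicInterior_subset hx)
  · rw [affineSpan_convexHull] at hwS ⊢
    rw [← image_changeNumeraire_image hS0]
    exact changeNumeraire_mem_affineSpan_image hGS0 hwS hw
  · rw [← changeNumeraire_changeNumeraire hw]
    exact changeNumeraire_mem_convexHull_image hS hwS

end ChangeNumeraire

theorem persp_apply_zero {d : ℕ} (s : Fin (d + 2) → ℝ) : persp (d + 1) s 0 = s 1 / s 0 := rfl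

theorem changeNumeraire_persp {d : ℕ} {s : Fin (d + 2) → ℝ} (hs : s 0 ≠ 0) :
    changeNumeraire (persp (d + 1) s) = perspY d s := by
  funext i
  rcases eq_or_ne i 0 with rfl | hi
  · simp [changeNumeraire, persp, perspY]
  · simp [changeNumeraire, persp, perspY, hi]
    field_simp

theorem change_numeraire_arbitrage_free_general {d : ℕ} (E : Set (Fin (d + 2) → ℝ))
    (hE : E ⊆ {s : Fin (d + 2) → ℝ | 0 < s 0 ∧ 0 < s 1})
    (s : Fin (d + 2) → ℝ)
    (h : persp (d + 1) s ∈ intrinsicInterior ℝ (convexHull ℝ (persp (d + 1) '' E))) :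
    perspY d s ∈ intrinsicInterior ℝ (convexHull ℝ (perspY d '' E)) := by
  have hX : ∀ x ∈ persp (d + 1) '' E, 0 < x 0 := by
    rintro _ ⟨e, he, rfl⟩
    rw [persp_apply_zero]
    exact div_pos (hE he).2 (hE he).1
  have hY : perspY d '' E = changeNumeraire '' (persp (d + 1) '' E) := by
    rw [image_image]
    exact image_congr fun e he => (changeNumeraire_persp (hE he).1.ne').symm
  -- `persp (d + 1) s 0 = s 1 / s 0` would be `0` if `s 0 = 0`.
  have hs0 : s 0 ≠ 0 := by
    intro hs0
    have := pos_apply_of_mem_convexHull hX (intrinsicInterior_subset h)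
    simp [persp_apply_zero, hs0] at this
  rw [hY, ← changeNumeraire_persp hs0]
  exact changeNumeraire_mem_intrinsicInterior_convexHull_image hX h

/-- Change-of-numeraire invariance of the local arbitrage-free property. -/
theorem change_numeraire_arbitrage_free {d : ℕ} (E : Set (Fin (d + 2) → ℝ))
    (hE : E ⊆ {s : Fin (d + 2) → ℝ | 0 < s 0 ∧ 0 < s 1})
    (s : Fin (d + 2) → ℝ) (hs : s ∈ E)
    (h : persp (d + 1) s ∈ intrinsicInterior ℝ (convexHull ℝ (persp (d + 1) '' E))) :
    perspY d s ∈ intrinsicInterior ℝ (convexHull ℝ (perspY d '' E)) :=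
  change_numeraire_arbitrage_free_general E hE s h
end
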